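/- Let T be a binary tree on leaves {0,1,…,n} (every node of degree 1 or 3), let r be the unique neighbor of leaf 0, and let T' be the rooted binary tree obtained by deleting leaf 0 and rooting at r. Then the bottom-up decoding algorithm applied to the leaves 1,…,n — which repeatedly merges the pair of current trees containing leaves i, j with the deepest LCA depth d_0(i∨j) in T — returns exactly T'. -/

import Mathlib

/-- Rooted binary trees with `ℕ`-labeled leaves. -/
inductive BT where
  | leaf (l : ℕ) : BT
  | node (a b : BT) : BT
deriving DecidableEq

/-- The list of leaf labels of a rooted binary tree. -/
def BT.leafList : BT → List ℕ
  | .leaf l => [l]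
  | .node a b => a.leafList ++ b.leafList

/-- The depth (distance from the root) of the lowest common ancestor of leaves `i, j`. -/
def BT.lcaDepth : BT → ℕ → ℕ → ℕ
  | .leaf _, _, _ => 0
  | .node a b, i, j =>
    if i ∈ a.leafList ∧ j ∈ a.leafList then a.lcaDepth i j + 1
    else if i ∈ b.leafList ∧ j ∈ b.leafList then b.lcaDepth i j + 1
    else 0

/-- One step of the bottom-up decoding: if leaves `i` and `j` lie in different trees of the
forest `F`, merge those two trees under a new node. -/
def mergeStep (F : List BT) (i j : ℕ) : List BT :=
  match F.find? (fun t => decide (i ∈ t.leafList)), F.find? (fun t => decide (j ∈ t.leafList)) with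
  | some a, some b =>
      if a = b then F
      else BT.node a b :: F.filter (fun t => decide (t ≠ a ∧ t ≠ b))
  | _, _ => F

/-- The bottom-up decoding algorithm: process the list `S` of pairs in order, merging the
trees containing the two leaves whenever they are distinct. -/
def decode (S : List (ℕ × ℕ)) (F : List BT) : List BT :=
  S.foldl (fun F p => mergeStep F p.1 p.2) F

/-- Equality of rooted binary trees up to reordering of the two children of each node
(the decoding algorithm attaches the two merged trees as children in an arbitrary order). -/
inductive BT.Equiv : BT → BT → Prop
  | leaf (l : ℕ) : BT.Equiv (.leaf l) (.leaf l)
  | node {a b a' b' : BT} : BT.Equiv a a' → BT.Equiv b b' → BT.Equiv (.node a b) (.node a' b')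
  | swap {a b a' b' : BT} : BT.Equiv a b' → BT.Equiv b a' → BT.Equiv (.node a b) (.node a' b')

lemma BT.leafList_ne_nil (t : BT) : t.leafList ≠ [] := by
  induction t with
  | leaf l => simp [BT.leafList]
  | node a b ha hb => simp [BT.leafList, ha]

lemma BT.Equiv.perm {t t' : BT} (h : BT.Equiv t t') : t.leafList.Perm t'.leafList := by
  induction h with
  | leaf l => exact List.Perm.refl _
  | node h1 h2 ih1 ih2 => exact (ih1.append ih2)
  | swap h1 h2 ih1 ih2 =>
      simpa [BT.leafList] using (ih1.append ih2).trans List.perm_append_comm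

def Disj (s t : BT) : Prop := ∀ x ∈ s.leafList, x ∉ t.leafList

lemma Disj.symm {s t : BT} (h : Disj s t) : Disj t s := fun x hx hx' => h x hx' hx

def Good (F : List BT) : Prop := F.Pairwise Disj

lemma Good.perm {F F' : List BT} (h : Good F) (hp : F.Perm F') : Good F' :=
  ((List.Perm.pairwise_iff (fun h => h.symm) hp).1 h)

lemma Good.rel {F : List BT} (h : Good F) {s t : BT} (hs : s ∈ F) (ht : t ∈ F)
    (hne : s ≠ t) : Disj s t :=
  by haveI : Std.Symm Disj := ⟨fun _ _ h => Disj.symm h⟩; exact h.forall hs ht hne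

lemma find?_eq_some {F : List BT} (hG : Good F) {t : BT} (ht : t ∈ F) {i : ℕ}
    (hi : i ∈ t.leafList) :
    F.find? (fun t => decide (i ∈ t.leafList)) = some t := by
  induction F with
  | nil => cases ht
  | cons s F ih =>
      rcases List.pairwise_cons.1 hG with ⟨hs, hG'⟩
      rcases List.mem_cons.1 ht with rfl | ht
      · simp [List.find?_cons, hi]
      · have hns : i ∉ s.leafList := fun h => hs t ht i h hi
        rw [List.find?_cons_of_neg (by simpa using hns)]
        exact ih hG' ht

lemma mergeStep_same {F : List BT} (hG : Good F) {t : BT} (ht : t ∈ F) {i j : ℕ}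
    (hi : i ∈ t.leafList) (hj : j ∈ t.leafList) : mergeStep F i j = F := by
  unfold mergeStep
  rw [find?_eq_some hG ht hi, find?_eq_some hG ht hj]
  simp

lemma mergeStep_diff {F : List BT} (hG : Good F) {a b : BT} (ha : a ∈ F) (hb : b ∈ F)
    {i j : ℕ} (hi : i ∈ a.leafList) (hj : j ∈ b.leafList) (hab : a ≠ b) :
    mergeStep F i j = BT.node a b :: F.filter (fun t => decide (t ≠ a ∧ t ≠ b)) := by
  unfold mergeStep
  rw [find?_eq_some hG ha hi, find?_eq_some hG hb hj]
  simp [hab]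

lemma mergeStep_none_left {F : List BT} {i j : ℕ}
    (h : F.find? (fun t => decide (i ∈ t.leafList)) = none) : mergeStep F i j = F := by
  unfold mergeStep
  rw [h]

lemma mergeStep_none_right {F : List BT} {i j : ℕ}
    (h : F.find? (fun t => decide (j ∈ t.leafList)) = none) : mergeStep F i j = F := by
  unfold mergeStep
  rw [h]
  rcases hfi : F.find? (fun t => decide (i ∈ t.leafList)) with _ | a <;> rw [hfi]

lemma mergeStep_singleton (N : BT) (i j : ℕ) : mergeStep [N] i j = [N] := by
  by_cases hi : i ∈ N.leafList
  · by_cases hj : j ∈ N.leafList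
    · exact mergeStep_same (by simp [Good]) (by simp) hi hj
    · exact mergeStep_none_right (by simp [List.find?_cons, hj])
  · exact mergeStep_none_left (by simp [List.find?_cons, hi])

lemma decode_singleton (S : List (ℕ × ℕ)) (N : BT) : decode S [N] = [N] := by
  induction S with
  | nil => rfl
  | cons p S ih => simp [decode, List.foldl_cons, mergeStep_singleton] at ih ⊢; exact ih

def memF (x : ℕ) (F : List BT) : Prop := ∃ t ∈ F, x ∈ t.leafList

lemma mergeStep_cases (F : List BT) (i j : ℕ) :
    mergeStep F i j = F ∨ ∃ a b, a ∈ F ∧ b ∈ F ∧ i ∈ a.leafList ∧ j ∈ b.leafList ∧ a ≠ b ∧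
      mergeStep F i j = BT.node a b :: F.filter (fun t => decide (t ≠ a ∧ t ≠ b)) := by
  rcases hfi : F.find? (fun t => decide (i ∈ t.leafList)) with _ | a
  · left; exact mergeStep_none_left hfi
  rcases hfj : F.find? (fun t => decide (j ∈ t.leafList)) with _ | b
  · left; exact mergeStep_none_right hfj
  by_cases hab : a = b
  · left; unfold mergeStep; rw [hfi, hfj]; simp [hab]
  · right
    refine ⟨a, b, List.mem_of_find?_eq_some hfi, List.mem_of_find?_eq_some hfj,
      by simpa using List.find?_some hfi, by simpa using List.find?_some hfj, hab, ?_⟩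
    unfold mergeStep; rw [hfi, hfj]; simp [hab]

lemma Good.mergeStep {F : List BT} (hG : Good F) (i j : ℕ) : Good (mergeStep F i j) := by
  rcases mergeStep_cases F i j with h | ⟨a, b, ha, hb, hi, hj, hab, h⟩
  · rwa [h]
  rw [h]
  constructor
  · intro t htf x hx
    rcases List.mem_filter.1 htf with ⟨htF, hdec⟩
    rcases (by simpa using hdec : t ≠ a ∧ t ≠ b) with ⟨hta, htb⟩
    rcases List.mem_append.1 (by simpa [BT.leafList] using hx) with hxa | hxb
    · exact (hG.rel ha htF (fun h => hta h.symm)) x hxa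
    · exact (hG.rel hb htF (fun h => htb h.symm)) x hxb
  · exact hG.sublist (List.filter_sublist (l := F))

lemma memF_mergeStep {F : List BT} {x : ℕ} (i j : ℕ) :
    memF x (mergeStep F i j) ↔ memF x F := by
  rcases mergeStep_cases F i j with h | ⟨a, b, ha, hb, hi, hj, hab, h⟩
  · rw [h]
  rw [h]
  constructor
  · rintro ⟨t, ht, hx⟩
    rcases List.mem_cons.1 ht with rfl | ht
    · rcases List.mem_append.1 (by simpa [BT.leafList] using hx) with hxa | hxb
      · exact ⟨a, ha, hxa⟩
      · exact ⟨b, hb, hxb⟩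
    · exact ⟨t, (List.mem_filter.1 ht).1, hx⟩
  · rintro ⟨t, ht, hx⟩
    by_cases hta : t = a
    · exact ⟨BT.node a b, List.mem_cons_self, by simp [BT.leafList, hta ▸ hx]⟩
    by_cases htb : t = b
    · exact ⟨BT.node a b, List.mem_cons_self, by simp [BT.leafList, htb ▸ hx]⟩
    · exact ⟨t, List.mem_cons_of_mem _ (List.mem_filter.2 ⟨ht, by simp [hta, htb]⟩), hx⟩

lemma sub_mergeStep {F : List BT} {Q : ℕ → Prop} (hF : ∀ t ∈ F, ∀ x ∈ t.leafList, Q x)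
    (i j : ℕ) : ∀ t ∈ mergeStep F i j, ∀ x ∈ t.leafList, Q x := by
  rcases mergeStep_cases F i j with h | ⟨a, b, ha, hb, hi, hj, hab, h⟩
  · rwa [h]
  rw [h]
  intro t ht x hx
  rcases List.mem_cons.1 ht with rfl | ht
  · rcases List.mem_append.1 (by simpa [BT.leafList] using hx) with hxa | hxb
    · exact hF a ha x hxa
    · exact hF b hb x hxb
  · exact hF t (List.mem_filter.1 ht).1 x hx

lemma mergeStep_perm {F F' : List BT} (hG : Good F) (hp : F.Perm F') (i j : ℕ) :
    (mergeStep F i j).Perm (mergeStep F' i j) := by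
  classical
  have hG' : Good F' := hG.perm hp
  by_cases hi : memF i F
  · obtain ⟨a, ha, hia⟩ := hi
    by_cases hj : memF j F
    · obtain ⟨b, hb, hjb⟩ := hj
      by_cases hab : a = b
      · subst hab
        rw [mergeStep_same hG ha hia hjb, mergeStep_same hG' (hp.mem_iff.1 ha) hia hjb]
        exact hp
      · rw [mergeStep_diff hG ha hb hia hjb hab,
          mergeStep_diff hG' (hp.mem_iff.1 ha) (hp.mem_iff.1 hb) hia hjb hab]
        exact (hp.filter _).cons _
    · have h1 : F.find? (fun t => decide (j ∈ t.leafList)) = none :=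
        List.find?_eq_none.2 (fun t ht => by simp; exact fun hjx => hj ⟨t, ht, hjx⟩)
      have h2 : F'.find? (fun t => decide (j ∈ t.leafList)) = none :=
        List.find?_eq_none.2 (fun t ht => by simp; exact fun hjx => hj ⟨t, hp.mem_iff.2 ht, hjx⟩)
      rw [mergeStep_none_right h1, mergeStep_none_right h2]; exact hp
  · have h1 : F.find? (fun t => decide (i ∈ t.leafList)) = none :=
      List.find?_eq_none.2 (fun t ht => by simp; exact fun hix => hi ⟨t, ht, hix⟩)
    have h2 : F'.find? (fun t => decide (i ∈ t.leafList)) = none :=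
      List.find?_eq_none.2 (fun t ht => by simp; exact fun hix => hi ⟨t, hp.mem_iff.2 ht, hix⟩)
    rw [mergeStep_none_left h1, mergeStep_none_left h2]; exact hp

lemma decode_perm {F F' : List BT} (hG : Good F) (hp : F.Perm F') (S : List (ℕ × ℕ)) :
    (decode S F).Perm (decode S F') := by
  induction S generalizing F F' with
  | nil => exact hp
  | cons p S ih =>
      simp only [decode, List.foldl_cons] at *
      exact ih (hG.mergeStep p.1 p.2) (mergeStep_perm hG hp p.1 p.2)

lemma Good.decode {F : List BT} (hG : Good F) (S : List (ℕ × ℕ)) : Good (decode S F) := by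
  induction S generalizing F with
  | nil => exact hG
  | cons p S ih => exact ih (hG.mergeStep p.1 p.2)

lemma memF_decode {F : List BT} {x : ℕ} (S : List (ℕ × ℕ)) :
    memF x (decode S F) ↔ memF x F := by
  induction S generalizing F with
  | nil => exact Iff.rfl
  | cons p S ih => exact (ih).trans (memF_mergeStep p.1 p.2)

lemma sub_decode {F : List BT} {Q : ℕ → Prop} (hF : ∀ t ∈ F, ∀ x ∈ t.leafList, Q x)
    (S : List (ℕ × ℕ)) : ∀ t ∈ decode S F, ∀ x ∈ t.leafList, Q x := by
  induction S generalizing F with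
  | nil => exact hF
  | cons p S ih => exact ih (sub_mergeStep hF p.1 p.2)

lemma decode_split (La : List ℕ) (P : List (ℕ × ℕ)) (A B : List BT)
    (hG : Good (A ++ B))
    (hA : ∀ t ∈ A, ∀ x ∈ t.leafList, x ∈ La)
    (hB : ∀ t ∈ B, ∀ x ∈ t.leafList, x ∉ La)
    (hP : ∀ p ∈ P, (p.1 ∈ La ∧ p.2 ∈ La ∧ memF p.1 A ∧ memF p.2 A) ∨
              (p.1 ∉ La ∧ p.2 ∉ La ∧ memF p.1 B ∧ memF p.2 B)) :
    (decode P (A ++ B)).Perm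
      (decode (P.filter (fun p => decide (p.1 ∈ La))) A ++
       decode (P.filter (fun p => decide (p.1 ∉ La))) B) := by
  induction P generalizing A B with
  | nil => simp [decode]
  | cons p P ih =>
    have hGA : Good A := (List.pairwise_append.1 hG).1
    have hGB : Good B := (List.pairwise_append.1 hG).2.1
    rcases hP p (List.mem_cons_self) with ⟨h1, h2, ⟨a, ha, hia⟩, ⟨b, hb, hjb⟩⟩ |
        ⟨h1, h2, ⟨a, ha, hia⟩, ⟨b, hb, hjb⟩⟩
    · -- pair within A
      have hkey : mergeStep (A ++ B) p.1 p.2 = mergeStep A p.1 p.2 ++ B := by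
        by_cases hab : a = b
        · subst hab
          rw [mergeStep_same hG (List.mem_append_left _ ha) hia hjb,
            mergeStep_same hGA ha hia hjb]
        · rw [mergeStep_diff hG (List.mem_append_left _ ha) (List.mem_append_left _ hb)
            hia hjb hab, mergeStep_diff hGA ha hb hia hjb hab, List.filter_append]
          have : B.filter (fun t => decide (t ≠ a ∧ t ≠ b)) = B := by
            apply List.filter_eq_self.2
            intro t ht
            simp only [decide_eq_true_eq]
            constructor
            · rintro rfl; exact hB t ht p.1 hia h1
            · rintro rfl; exact hB t ht p.2 hjb h2
          rw [this]
          simp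
      have hfa : (p :: P).filter (fun p => decide (p.1 ∈ La)) =
          p :: P.filter (fun p => decide (p.1 ∈ La)) := by simp [List.filter_cons, h1]
      have hfb : (p :: P).filter (fun p => decide (p.1 ∉ La)) =
          P.filter (fun p => decide (p.1 ∉ La)) := by simp [List.filter_cons, h1]
      rw [hfa, hfb]
      show (decode P (mergeStep (A ++ B) p.1 p.2)).Perm _
      rw [hkey]
      have hG' : Good (mergeStep A p.1 p.2 ++ B) := by
        rw [← hkey]; exact hG.mergeStep _ _
      exact ih (mergeStep A p.1 p.2) B hG' (sub_mergeStep hA _ _) hB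
        (fun q hq => by
          rcases hP q (List.mem_cons_of_mem _ hq) with ⟨k1, k2, k3, k4⟩ | hk
          · exact Or.inl ⟨k1, k2, (memF_mergeStep _ _).2 k3, (memF_mergeStep _ _).2 k4⟩
          · exact Or.inr hk)
    · -- pair within B
      have hfa : (p :: P).filter (fun p => decide (p.1 ∈ La)) =
          P.filter (fun p => decide (p.1 ∈ La)) := by simp [List.filter_cons, h1]
      have hfb : (p :: P).filter (fun p => decide (p.1 ∉ La)) =
          p :: P.filter (fun p => decide (p.1 ∉ La)) := by simp [List.filter_cons, h1]
      rw [hfa, hfb]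
      have hkey : (mergeStep (A ++ B) p.1 p.2).Perm (A ++ mergeStep B p.1 p.2) := by
        by_cases hab : a = b
        · subst hab
          rw [mergeStep_same hG (List.mem_append_right _ ha) hia hjb,
            mergeStep_same hGB ha hia hjb]
        · rw [mergeStep_diff hG (List.mem_append_right _ ha) (List.mem_append_right _ hb)
            hia hjb hab, mergeStep_diff hGB ha hb hia hjb hab, List.filter_append]
          have : A.filter (fun t => decide (t ≠ a ∧ t ≠ b)) = A := by
            apply List.filter_eq_self.2
            intro t ht
            simp only [decide_eq_true_eq]
            constructor
            · rintro rfl; exact hB t ha p.1 hia (hA t ht p.1 hia)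
            · rintro rfl; exact hB t hb p.2 hjb (hA t ht p.2 hjb)
          rw [this]
          exact List.perm_middle.symm
      have hG1 : Good (mergeStep (A ++ B) p.1 p.2) := hG.mergeStep _ _
      have hG2 : Good (A ++ mergeStep B p.1 p.2) := hG1.perm hkey
      show (decode P (mergeStep (A ++ B) p.1 p.2)).Perm _
      refine (decode_perm hG1 hkey P).trans ?_
      exact ih A (mergeStep B p.1 p.2) hG2 hA (sub_mergeStep hB _ _)
        (fun q hq => by
          rcases hP q (List.mem_cons_of_mem _ hq) with hk | ⟨k1, k2, k3, k4⟩
          · exact Or.inl hk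
          · exact Or.inr ⟨k1, k2, (memF_mergeStep _ _).2 k3, (memF_mergeStep _ _).2 k4⟩)

lemma sorted_split {α : Type*} (key : α → ℕ) (w : α → Bool) (S : List α)
    (hs : S.Pairwise (fun p q => key q ≤ key p))
    (hw : ∀ p ∈ S, w p = true ↔ 1 ≤ key p) :
    S = S.filter w ++ S.filter (fun p => !w p) := by
  induction S with
  | nil => rfl
  | cons p S ih =>
    rcases List.pairwise_cons.1 hs with ⟨hp, hs'⟩
    by_cases hwp : w p = true
    · rw [List.filter_cons_of_pos hwp, List.filter_cons_of_neg (by simp [hwp])]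
      rw [List.cons_append]
      congr 1
      exact ih hs' (fun q hq => hw q (List.mem_cons_of_mem _ hq))
    · have hkey : key p = 0 := by
        rcases Nat.eq_zero_or_pos (key p) with h | h
        · exact h
        · exact absurd ((hw p (List.mem_cons_self)).2 h) hwp
      have hall : ∀ q ∈ S, ¬ w q = true := by
        intro q hq hwq
        have h1 := (hw q (List.mem_cons_of_mem _ hq)).1 hwq
        have h2 := hp q hq
        omega
      rw [List.filter_cons_of_neg hwp, List.filter_cons_of_pos (by simp [hwp])]
      rw [List.filter_eq_nil_iff.2 hall, List.nil_append]
      rw [List.filter_eq_self.2 (fun q hq => by simp [hall q hq])]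

lemma lca_left {a b : BT} {i j : ℕ} (hi : i ∈ a.leafList) (hj : j ∈ a.leafList) :
    (BT.node a b).lcaDepth i j = a.lcaDepth i j + 1 := by
  simp [BT.lcaDepth, hi, hj]

lemma lca_right {a b : BT} {i j : ℕ} (hna : ¬(i ∈ a.leafList ∧ j ∈ a.leafList))
    (hib : i ∈ b.leafList) (hjb : j ∈ b.leafList) :
    (BT.node a b).lcaDepth i j = b.lcaDepth i j + 1 := by
  rw [BT.lcaDepth, if_neg hna, if_pos (⟨hib, hjb⟩ : i ∈ b.leafList ∧ j ∈ b.leafList)]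

lemma lca_cross {a b : BT} {i j : ℕ} (hna : ¬(i ∈ a.leafList ∧ j ∈ a.leafList))
    (hnb : ¬(i ∈ b.leafList ∧ j ∈ b.leafList)) :
    (BT.node a b).lcaDepth i j = 0 := by
  rw [BT.lcaDepth, if_neg hna, if_neg hnb]

lemma decode_append (W C : List (ℕ × ℕ)) (F : List BT) :
    decode (W ++ C) F = decode C (decode W F) := by
  simp [decode, List.foldl_append]

lemma main_aux (T' : BT) : ∀ (S : List (ℕ × ℕ)), T'.leafList.Nodup →
    (∀ p ∈ S, p.1 ∈ T'.leafList ∧ p.2 ∈ T'.leafList ∧ p.1 ≠ p.2) →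
    (∀ i ∈ T'.leafList, ∀ j ∈ T'.leafList, i ≠ j → (i, j) ∈ S ∨ (j, i) ∈ S) →
    (S.Pairwise (fun p q => 1 + T'.lcaDepth q.1 q.2 ≤ 1 + T'.lcaDepth p.1 p.2)) →
    ∃ T'' : BT, decode S (T'.leafList.map BT.leaf) = [T''] ∧ BT.Equiv T'' T' := by
  induction T' with
  | leaf l =>
    intro S _ _ _ _
    exact ⟨BT.leaf l, by simp [BT.leafList, decode_singleton], BT.Equiv.leaf l⟩
  | node a b iha ihb =>
    intro S hnodup hSmem hScover hSsorted
    classical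
    have hleaf : (BT.node a b).leafList = a.leafList ++ b.leafList := rfl
    rw [hleaf] at hnodup hSmem hScover
    obtain ⟨hna, hnb, hdisj⟩ := List.nodup_append.1 hnodup
    set La := a.leafList with hLa
    set w : ℕ × ℕ → Bool := fun p => decide ((p.1 ∈ La) ↔ (p.2 ∈ La)) with hwdef
    -- side classification of a leaf
    have hside : ∀ x ∈ La ++ b.leafList, x ∉ La → x ∈ b.leafList := by
      intro x hx hxa; rcases List.mem_append.1 hx with h | h
      · exact absurd h hxa
      · exact h
    have hBside : ∀ x ∈ b.leafList, x ∉ La := fun x hx hxa => hdisj x hxa x hx rfl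
    -- w characterization
    have hw : ∀ p ∈ S, w p = true ↔ 1 ≤ (BT.node a b).lcaDepth p.1 p.2 := by
      intro p hp
      obtain ⟨h1, h2, hne⟩ := hSmem p hp
      by_cases c1 : p.1 ∈ La <;> by_cases c2 : p.2 ∈ La
      · rw [lca_left c1 c2]; simp [hwdef, c1, c2]
      · have h2b := hside _ h2 c2
        rw [lca_cross (fun h => c2 h.2) (fun h => hBside _ h.1 c1)]
        simp [hwdef, c1, c2]
      · have h1b := hside _ h1 c1
        rw [lca_cross (fun h => c1 h.1) (fun h => hBside _ h.2 c2)]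
        simp [hwdef, c1, c2]
      · have h1b := hside _ h1 c1
        have h2b := hside _ h2 c2
        rw [lca_right (fun h => c1 h.1) h1b h2b]
        simp [hwdef, c1, c2]
    have hsorted' : S.Pairwise (fun p q =>
        (BT.node a b).lcaDepth q.1 q.2 ≤ (BT.node a b).lcaDepth p.1 p.2) :=
      hSsorted.imp (fun h => by omega)
    have hsplit := sorted_split (fun p => (BT.node a b).lcaDepth p.1 p.2) w S hsorted' hw
    set W := S.filter w with hW
    set C := S.filter (fun p => !w p) with hC
    set A0 := La.map BT.leaf with hA0
    set B0 := b.leafList.map BT.leaf with hB0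
    have hF0 : (BT.node a b).leafList.map BT.leaf = A0 ++ B0 := by
      rw [hleaf, List.map_append]
    have hGF0 : Good (A0 ++ B0) := by
      rw [hA0, hB0, ← List.map_append]
      rw [Good, List.pairwise_map]
      exact hnodup.imp (fun hxy => by
        intro z hz hz'
        simp [BT.leafList] at hz hz'
        exact hxy (hz ▸ hz'))
    have hA0sub : ∀ t ∈ A0, ∀ x ∈ t.leafList, x ∈ La := by
      rintro t ht x hx
      obtain ⟨y, hy, rfl⟩ := List.mem_map.1 ht
      simp [BT.leafList] at hx
      exact hx ▸ hy
    have hB0sub : ∀ t ∈ B0, ∀ x ∈ t.leafList, x ∉ La := by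
      rintro t ht x hx
      obtain ⟨y, hy, rfl⟩ := List.mem_map.1 ht
      simp [BT.leafList] at hx
      exact hx ▸ hBside y hy
    -- membership of singletons
    have hmemA0 : ∀ x ∈ La, memF x A0 := fun x hx =>
      ⟨BT.leaf x, List.mem_map.2 ⟨x, hx, rfl⟩, by simp [BT.leafList]⟩
    have hmemB0 : ∀ x ∈ b.leafList, memF x B0 := fun x hx =>
      ⟨BT.leaf x, List.mem_map.2 ⟨x, hx, rfl⟩, by simp [BT.leafList]⟩
    have hPW : ∀ p ∈ W, (p.1 ∈ La ∧ p.2 ∈ La ∧ memF p.1 A0 ∧ memF p.2 A0) ∨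
        (p.1 ∉ La ∧ p.2 ∉ La ∧ memF p.1 B0 ∧ memF p.2 B0) := by
      intro p hp
      obtain ⟨hpS, hpw⟩ := List.mem_filter.1 hp
      have hiff : (p.1 ∈ La) ↔ (p.2 ∈ La) := by simpa [hwdef] using hpw
      obtain ⟨h1, h2, hne⟩ := hSmem p hpS
      by_cases c1 : p.1 ∈ La
      · exact Or.inl ⟨c1, hiff.1 c1, hmemA0 _ c1, hmemA0 _ (hiff.1 c1)⟩
      · have c2 : p.2 ∉ La := fun h => c1 (hiff.2 h)
        exact Or.inr ⟨c1, c2, hmemB0 _ (hside _ h1 c1), hmemB0 _ (hside _ h2 c2)⟩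
    have hWsplit := decode_split La W A0 B0 hGF0 hA0sub hB0sub hPW
    set Wa := W.filter (fun p => decide (p.1 ∈ La)) with hWa
    set Wb := W.filter (fun p => decide (p.1 ∉ La)) with hWb
    -- conditions for IH on a
    have hWaS : Wa.Sublist S := (List.filter_sublist (l := W)).trans (List.filter_sublist (l := S))
    have hWbS : Wb.Sublist S := (List.filter_sublist (l := W)).trans (List.filter_sublist (l := S))
    have hWmem : ∀ p ∈ W, p ∈ S ∧ ((p.1 ∈ La) ↔ (p.2 ∈ La)) := by
      intro p hp
      obtain ⟨hpS, hpw⟩ := List.mem_filter.1 hp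
      exact ⟨hpS, by simpa [hwdef] using hpw⟩
    -- IH for a
    have hSmem_a : ∀ p ∈ Wa, p.1 ∈ a.leafList ∧ p.2 ∈ a.leafList ∧ p.1 ≠ p.2 := by
      intro p hp
      obtain ⟨hpW, hp1⟩ := List.mem_filter.1 hp
      have hp1' : p.1 ∈ La := by simpa using hp1
      obtain ⟨hpS, hiff⟩ := hWmem p hpW
      exact ⟨hp1', hiff.1 hp1', (hSmem p hpS).2.2⟩
    have hScover_a : ∀ i ∈ a.leafList, ∀ j ∈ a.leafList, i ≠ j →
        (i, j) ∈ Wa ∨ (j, i) ∈ Wa := by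
      intro i hi j hj hne
      have hwa : ∀ x ∈ La, ∀ y ∈ La, (x, y) ∈ S → (x, y) ∈ Wa := by
        intro x hx y hy hmem
        refine List.mem_filter.2 ⟨List.mem_filter.2 ⟨hmem, ?_⟩, by simpa using hx⟩
        simp [hwdef, hx, hy]
      rcases hScover i (List.mem_append_left _ hi) j (List.mem_append_left _ hj) hne with h | h
      · exact Or.inl (hwa i hi j hj h)
      · exact Or.inr (hwa j hj i hi h)
    have hSsorted_a : Wa.Pairwise (fun p q =>
        1 + a.lcaDepth q.1 q.2 ≤ 1 + a.lcaDepth p.1 p.2) := by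
      refine (hSsorted.sublist hWaS).imp_of_mem ?_
      intro p q hp hq hle
      obtain ⟨hp1, hp2, _⟩ := hSmem_a p hp
      obtain ⟨hq1, hq2, _⟩ := hSmem_a q hq
      rw [lca_left hp1 hp2, lca_left hq1 hq2] at hle
      omega
    obtain ⟨Ta, hTa, hEa⟩ := iha Wa hna hSmem_a hScover_a hSsorted_a
    -- IH for b
    have hSmem_b : ∀ p ∈ Wb, p.1 ∈ b.leafList ∧ p.2 ∈ b.leafList ∧ p.1 ≠ p.2 := by
      intro p hp
      obtain ⟨hpW, hp1⟩ := List.mem_filter.1 hp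
      have hp1' : p.1 ∉ La := by simpa using hp1
      obtain ⟨hpS, hiff⟩ := hWmem p hpW
      have hp2' : p.2 ∉ La := fun h => hp1' (hiff.2 h)
      obtain ⟨h1, h2, hne⟩ := hSmem p hpS
      exact ⟨hside _ h1 hp1', hside _ h2 hp2', hne⟩
    have hScover_b : ∀ i ∈ b.leafList, ∀ j ∈ b.leafList, i ≠ j →
        (i, j) ∈ Wb ∨ (j, i) ∈ Wb := by
      intro i hi j hj hne
      have hwb : ∀ x ∈ b.leafList, ∀ y ∈ b.leafList, (x, y) ∈ S → (x, y) ∈ Wb := by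
        intro x hx y hy hmem
        refine List.mem_filter.2 ⟨List.mem_filter.2 ⟨hmem, ?_⟩, by simpa using hBside x hx⟩
        simp [hwdef, hBside x hx, hBside y hy]
      rcases hScover i (List.mem_append_right _ hi) j (List.mem_append_right _ hj) hne with h | h
      · exact Or.inl (hwb i hi j hj h)
      · exact Or.inr (hwb j hj i hi h)
    have hSsorted_b : Wb.Pairwise (fun p q =>
        1 + b.lcaDepth q.1 q.2 ≤ 1 + b.lcaDepth p.1 p.2) := by
      refine (hSsorted.sublist hWbS).imp_of_mem ?_
      intro p q hp hq hle
      obtain ⟨hp1, hp2, _⟩ := hSmem_b p hp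
      obtain ⟨hq1, hq2, _⟩ := hSmem_b q hq
      have hp1' : p.1 ∉ La := by simpa using (List.mem_filter.1 hp).2
      have hq1' : q.1 ∉ La := by simpa using (List.mem_filter.1 hq).2
      rw [lca_right (fun h => hp1' h.1) hp1 hp2,
        lca_right (fun h => hq1' h.1) hq1 hq2] at hle
      omega
    obtain ⟨Tb, hTb, hEb⟩ := ihb Wb hnb hSmem_b hScover_b hSsorted_b
    -- combine
    have hperm1 : (decode W (A0 ++ B0)).Perm ([Ta] ++ [Tb]) := by
      rw [hA0, hB0] at hWsplit ⊢
      rw [hTa] at hWsplit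
      rw [hTb] at hWsplit
      exact hWsplit
    have hGW : Good (decode W (A0 ++ B0)) := hGF0.decode W
    have hperm2 : (decode C (decode W (A0 ++ B0))).Perm (decode C [Ta, Tb]) :=
      decode_perm hGW hperm1 C
    -- C is nonempty
    obtain ⟨i0, hi0⟩ := List.exists_mem_of_ne_nil _ a.leafList_ne_nil
    obtain ⟨j0, hj0⟩ := List.exists_mem_of_ne_nil _ b.leafList_ne_nil
    have hne0 : i0 ≠ j0 := fun h => hdisj i0 hi0 j0 hj0 h
    have hCne : C ≠ [] := by
      rcases hScover i0 (List.mem_append_left _ hi0) j0 (List.mem_append_right _ hj0) hne0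
          with h | h
      · exact List.ne_nil_of_mem (List.mem_filter.2 ⟨h, by simp [hwdef, hi0, hBside j0 hj0]; exact hi0⟩)
      · exact List.ne_nil_of_mem (List.mem_filter.2 ⟨h, by simp [hwdef, hi0, hBside j0 hj0]; exact hi0⟩)
    obtain ⟨c, C', hCeq⟩ := List.exists_cons_of_ne_nil hCne
    have hcC : c ∈ C := hCeq ▸ List.mem_cons_self
    obtain ⟨hcS, hcw⟩ := List.mem_filter.1 hcC
    have hciff : ¬((c.1 ∈ La) ↔ (c.2 ∈ La)) := by simpa [hwdef] using hcw
    obtain ⟨hc1, hc2, hcne⟩ := hSmem c hcS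
    have hTaL : ∀ x, x ∈ Ta.leafList ↔ x ∈ La := fun x => hEa.perm.mem_iff
    have hTbL : ∀ x, x ∈ Tb.leafList ↔ x ∈ b.leafList := fun x => hEb.perm.mem_iff
    have hGTT : Good [Ta, Tb] := by
      refine List.pairwise_cons.2 ⟨?_, by simp [List.Pairwise]⟩
      intro t ht x hx hx'
      have ht' : t = Tb := by simpa using ht
      exact hBside x ((hTbL x).1 (ht' ▸ hx')) ((hTaL x).1 hx)
    have hTaTb : Ta ≠ Tb := by
      intro h
      exact hBside i0 ((hTbL i0).1 (h ▸ (hTaL i0).2 hi0)) hi0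
    have hmemTa : Ta ∈ [Ta, Tb] := List.mem_cons_self
    have hmemTb : Tb ∈ [Ta, Tb] := List.mem_cons_of_mem _ (List.mem_cons_self)
    have hfilterTT : ∀ u v : BT, [Ta, Tb].filter (fun t => decide (t ≠ Ta ∧ t ≠ Tb)) = [] := by
      intro u v; simp
    have hgoal : ∀ N : BT, mergeStep [Ta, Tb] c.1 c.2 = [N] →
        ∃ T'' : BT, decode S ((BT.node a b).leafList.map BT.leaf) = [T''] ∧ T'' = N := by
      intro N hms
      refine ⟨N, ?_, rfl⟩
      have heq : decode S ((BT.node a b).leafList.map BT.leaf)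
          = decode C (decode W (A0 ++ B0)) := by
        conv_lhs => rw [hsplit]
        rw [hF0, decode_append]
      rw [heq]
      have : decode C [Ta, Tb] = [N] := by
        rw [hCeq]
        show decode C' (mergeStep [Ta, Tb] c.1 c.2) = [N]
        rw [hms, decode_singleton]
      refine List.perm_singleton.1 ?_
      rw [← this]
      exact hperm2
    by_cases hc1a : c.1 ∈ La
    · have hc2a : c.2 ∉ La := fun h => hciff ⟨fun _ => h, fun _ => hc1a⟩
      have hc2b : c.2 ∈ b.leafList := hside _ hc2 hc2a
      have hms : mergeStep [Ta, Tb] c.1 c.2 = [BT.node Ta Tb] := by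
        rw [mergeStep_diff hGTT hmemTa hmemTb ((hTaL c.1).2 hc1a) ((hTbL c.2).2 hc2b) hTaTb]
        simp
      obtain ⟨T'', h1, h2⟩ := hgoal _ hms
      exact ⟨T'', h1, h2 ▸ BT.Equiv.node hEa hEb⟩
    · have hc1b : c.1 ∈ b.leafList := hside _ hc1 hc1a
      have hc2a : c.2 ∈ La := by
        by_contra hc2a
        exact hciff ⟨fun h => absurd h hc1a, fun h => absurd h hc2a⟩
      have hms : mergeStep [Ta, Tb] c.1 c.2 = [BT.node Tb Ta] := by
        rw [mergeStep_diff hGTT hmemTb hmemTa ((hTbL c.1).2 hc1b) ((hTaL c.2).2 hc2a)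
          (Ne.symm hTaTb)]
        simp
      obtain ⟨T'', h1, h2⟩ := hgoal _ hms
      exact ⟨T'', h1, h2 ▸ BT.Equiv.swap hEb hEa⟩

/-- Correctness of the bottom-up decoding.  Let `T` be a binary tree on leaves `0,1,…,n`
and `T'` the rooted binary tree obtained by deleting leaf `0` and rooting at its neighbor;
then `d_0(i∨j)`, the distance in `T` from leaf `0` to the LCA of `i,j`, equals
`1 + lcaDepth T' i j`.  If `S` enumerates all unordered pairs of distinct leaves of `T'`,
sorted in decreasing order of `d_0(i∨j)` (equivalently of `lcaDepth T'`), then the decoding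
algorithm, started from the forest of singleton leaves, returns exactly `T'` (up to the
order of children, which the algorithm chooses arbitrarily). -/
theorem decode_returns_tree (T' : BT) (hnodup : T'.leafList.Nodup)
    (S : List (ℕ × ℕ))
    (hSmem : ∀ p ∈ S, p.1 ∈ T'.leafList ∧ p.2 ∈ T'.leafList ∧ p.1 ≠ p.2)
    (hScover : ∀ i ∈ T'.leafList, ∀ j ∈ T'.leafList, i ≠ j → (i, j) ∈ S ∨ (j, i) ∈ S)
    (hSsorted : S.Pairwise (fun p q =>
      1 + T'.lcaDepth q.1 q.2 ≤ 1 + T'.lcaDepth p.1 p.2)) :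
    ∃ T'' : BT, decode S (T'.leafList.map BT.leaf) = [T''] ∧ BT.Equiv T'' T' :=
  main_aux T' S hnodup hSmem hScover hSsorted
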